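/- For the KMP failure function, any k < s such that P[1..k] is a suffix of P[1..s] is obtained by iterating fail from s: the set {k < s : P[1..k] is a suffix of P[1..s]} equals {fail(s), fail(fail(s)), …, 0}. -/

import Mathlib

/-!
Every iterate of `kmpFail` is a border, since a border of a border is a border. Conversely, a
border `k` of `P[1..s]` is at most `fail(s)`; if it is shorter, it is a border of the longest border
`P[1..fail(s)]` (two suffixes of one word, the shorter is a suffix of the longer), and strong
induction on `s` reaches it by further iteration.
-/

/-- The KMP failure function: `kmpFail P s` is the largest `k < s` such that
`P.take k` is a suffix of `P.take s` (the length of the longest border of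
`P[1..s]`). -/
def kmpFail {α : Type*} [DecidableEq α] (P : List α) (s : ℕ) : ℕ :=
  Nat.findGreatest (fun k => (P.take k) <:+ (P.take s)) (s - 1)

section KmpFail

variable {α : Type*} [DecidableEq α] (P : List α)

theorem kmpFail_le (s : ℕ) : kmpFail P s ≤ s :=
  (Nat.findGreatest_le _).trans (Nat.sub_le s 1)

theorem kmpFail_lt {s : ℕ} (hs : 0 < s) : kmpFail P s < s :=
  (Nat.findGreatest_le _).trans_lt (Nat.sub_lt hs one_pos)

theorem take_kmpFail_suffix (s : ℕ) : P.take (kmpFail P s) <:+ P.take s :=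
  Nat.findGreatest_spec (P := fun k => P.take k <:+ P.take s) (Nat.zero_le _) (by simp)

theorem le_kmpFail {s k : ℕ} (hk : k < s) (hsuf : P.take k <:+ P.take s) : k ≤ kmpFail P s :=
  Nat.le_findGreatest (Nat.le_sub_one_of_lt hk) hsuf

theorem take_iterate_kmpFail_suffix (s : ℕ) :
    ∀ j, P.take ((kmpFail P)^[j] s) <:+ P.take s
  | 0 => List.suffix_refl _
  | j + 1 => by
    rw [Function.iterate_succ_apply']
    exact (take_kmpFail_suffix P _).trans (take_iterate_kmpFail_suffix s j)

theorem iterate_kmpFail_le (s : ℕ) : ∀ j, (kmpFail P)^[j] s ≤ s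
  | 0 => le_rfl
  | j + 1 => by
    rw [Function.iterate_succ_apply']
    exact (kmpFail_le P _).trans (iterate_kmpFail_le s j)

theorem iterate_kmpFail_lt {s j : ℕ} (hs : 0 < s) (hj : 0 < j) : (kmpFail P)^[j] s < s := by
  obtain ⟨j, rfl⟩ := Nat.exists_eq_add_of_lt hj
  rw [zero_add, Function.iterate_succ_apply]
  exact (iterate_kmpFail_le P _ j).trans_lt (kmpFail_lt P hs)

theorem exists_iterate_kmpFail_eq_of_suffix {s k : ℕ} (hk : k < s)
    (hsuf : P.take k <:+ P.take s) : ∃ j, 0 < j ∧ (kmpFail P)^[j] s = k := by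
  induction s using Nat.strong_induction_on with
  | _ s ih =>
    rcases (le_kmpFail P hk hsuf).eq_or_lt with heq | hlt
    · exact ⟨1, one_pos, heq.symm⟩
    · have hsuf' : P.take k <:+ P.take (kmpFail P s) :=
        List.suffix_of_suffix_length_le hsuf (take_kmpFail_suffix P s) (by simp only [List.length_take]; omega)
      obtain ⟨j, -, hj⟩ := ih _ (kmpFail_lt P (by omega)) hlt hsuf'
      exact ⟨j + 1, j.succ_pos, by rwa [Function.iterate_succ_apply]⟩

end KmpFail

theorem kmp_borders_eq_fail_iterates_general {α : Type*} [DecidableEq α] (P : List α)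
    (s : ℕ) (h1 : 1 ≤ s) :
    ∀ k : ℕ, (k < s ∧ (P.take k) <:+ (P.take s)) ↔
      ∃ j, 0 < j ∧ (kmpFail P)^[j] s = k := by
  intro k
  constructor
  · rintro ⟨hk, hsuf⟩
    exact exists_iterate_kmpFail_eq_of_suffix P hk hsuf
  · rintro ⟨j, hj, rfl⟩
    exact ⟨iterate_kmpFail_lt P h1 hj, take_iterate_kmpFail_suffix P s j⟩

/-- Border characterization: the set `{k < s : P[1..k] is a suffix of P[1..s]}`
is exactly the set of iterates `{fail(s), fail(fail(s)), …, 0}` of the failure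
function applied to `s`. -/
theorem kmp_borders_eq_fail_iterates {α : Type*} [DecidableEq α] (P : List α)
    (s : ℕ) (h1 : 1 ≤ s) (h2 : s ≤ P.length) :
    ∀ k : ℕ, (k < s ∧ (P.take k) <:+ (P.take s)) ↔
      ∃ j, 0 < j ∧ (kmpFail P)^[j] s = k :=
  kmp_borders_eq_fail_iterates_general P s h1
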